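/- arXiv:1311.5832 — 3 statements merged into one kernel-verified Lean document; each statement's English description precedes it below -/
import Mathlib

section
/- Let d ≥ 2, let C be a d-copula, let u ∈ [0,1]^d, and let π ∈ S_d be any permutation of {1,…,d}. Then |C(u) − C(u_π)| ≤ (d−1)/(d+1), where u_π := (u_{π(1)},…,u_{π(d)}). -/
/-!
The `d`-increasing property on a box whose lower corner vanishes outside two coordinates `i, j`
(grounding kills all but four vertices) makes `C` 2-increasing in every pair of coordinates.
With grounding this makes `C` nondecreasing, and with the uniform margins 1-Lipschitz in each
coordinate. Hence, for `m = min u` and `S = ∑ u`, `C u` lies both in the Fréchet interval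
`[max 0 (S - (d - 1)), m]` and in `[C (m, …, m), C (m, …, m) + (S - d m)]`. These depend only on
`m` and `S`, which `u` and `u ∘ π` share, so `|C u - C (u ∘ π)|` is at most the shorter length,
and `min (m - max 0 (S - (d - 1))) (S - d m) ≤ (d - 1) / (d + 1)` for all `m`, `S`.
-/

/-- A `d`-copula: a function `C : [0,1]^d → ℝ` (defined on all of `(Fin d → ℝ)`,
with the copula conditions imposed on `[0,1]^d`) that is grounded, has uniform
one-dimensional margins, and is `d`-increasing. -/
def IsCopula (d : ℕ) (C : (Fin d → ℝ) → ℝ) : Prop :=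
  (∀ u : Fin d → ℝ, (∀ i, u i ∈ Set.Icc (0:ℝ) 1) → (∃ i, u i = 0) → C u = 0) ∧
  (∀ u : Fin d → ℝ, (∀ i, u i ∈ Set.Icc (0:ℝ) 1) →
    ∀ i : Fin d, (∀ j, j ≠ i → u j = 1) → C u = u i) ∧
  (∀ a b : Fin d → ℝ, (∀ i, a i ∈ Set.Icc (0:ℝ) 1) → (∀ i, b i ∈ Set.Icc (0:ℝ) 1) →
    (∀ i, a i ≤ b i) →
    0 ≤ ∑ S : Finset (Fin d),
        (-1 : ℝ) ^ (d - S.card) * C (fun k => if k ∈ S then b k else a k))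

open Function Finset

theorem monotoneOn_univ_pi_of_update {ι α β : Type*} [Fintype ι] [DecidableEq ι]
    [Preorder α] [Preorder β] {s : Set α} {f : (ι → α) → β}
    (hf : ∀ v ∈ Set.univ.pi (fun _ ↦ s), ∀ j, ∀ x ∈ s, ∀ y ∈ s, x ≤ y →
      f (update v j x) ≤ f (update v j y)) :
    MonotoneOn f (Set.univ.pi fun _ ↦ s) := by
  intro a ha b hb hab
  have path : ∀ t : Finset ι, f a ≤ f (fun k ↦ if k ∈ t then b k else a k) := by
    intro t
    induction t using Finset.induction_on with
    | empty => simp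
    | insert j t hj ih =>
      set v : ι → α := fun k ↦ if k ∈ t then b k else a k
      have hv : v ∈ Set.univ.pi fun _ ↦ s := fun k _ ↦ by
        by_cases hk : k ∈ t <;> simp [v, hk, ha k trivial, hb k trivial]
      calc f a ≤ f v := ih
        _ = f (update v j (a j)) := by rw [← show v j = a j by simp [v, hj], update_eq_self]
        _ ≤ f (update v j (b j)) := hf v hv j _ (ha j trivial) _ (hb j trivial) (hab j)
        _ = f (fun k ↦ if k ∈ insert j t then b k else a k) := by
          congr 1; ext k; by_cases hk : k = j <;> simp [v, hk]
  simpa using path univ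

theorem Set.update_mem_univ_pi {ι : Type*} {α : ι → Type*} [DecidableEq ι] {t : ∀ i, Set (α i)}
    {v : ∀ i, α i} (hv : v ∈ Set.univ.pi t) {i : ι} {x : α i} (hx : x ∈ t i) :
    update v i x ∈ Set.univ.pi t :=
  (Set.update_mem_pi_iff_of_mem hv).2 fun _ ↦ hx

theorem min_sub_max_le_div {d : ℝ} (hd : 1 ≤ d) (m S : ℝ) :
    min (m - max 0 (S - (d - 1))) (S - d * m) ≤ (d - 1) / (d + 1) := by
  set c := (d - 1) / (d + 1)
  have hc : c * (d + 1) = d - 1 := div_mul_cancel₀ _ (by linarith)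
  rcases le_or_gt (m - max 0 (S - (d - 1))) c with h | h
  · exact min_le_of_left_le h
  · have h₀ := le_max_left 0 (S - (d - 1))
    have h₁ := le_max_right 0 (S - (d - 1))
    have hmc : 0 ≤ (d - 1) * (m - c) := mul_nonneg (by linarith) (by linarith)
    exact min_le_of_right_le (by linarith)

local notation "𝕀" => Set.univ.pi fun _ ↦ Set.Icc (0 : ℝ) 1

namespace IsCopula

variable {d : ℕ} {C : (Fin d → ℝ) → ℝ}

theorem volume_eq_sum_powerset (hC : IsCopula d C) {a b : Fin d → ℝ} (ha : a ∈ 𝕀) (hb : b ∈ 𝕀)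
    (F : Finset (Fin d)) (haF : ∀ k ∉ F, a k = 0) :
    ∑ S : Finset (Fin d), (-1 : ℝ) ^ (d - #S) * C (fun k ↦ if k ∈ S then b k else a k) =
      ∑ R ∈ F.powerset,
        (-1 : ℝ) ^ (#F - #R) * C (fun k ↦ if k ∈ R ∪ Fᶜ then b k else a k) := by
  have hinj : Set.InjOn (· ∪ Fᶜ) (F.powerset : Set (Finset (Fin d))) := by
    intro R hR R' hR' h
    simp only [coe_powerset, Set.mem_preimage, Set.mem_powerset_iff, coe_subset] at hR hR'
    ext k
    by_cases hk : k ∈ F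
    · simpa [hk] using congrArg (k ∈ ·) h
    · exact iff_of_false (fun h ↦ hk (hR h)) (fun h ↦ hk (hR' h))
  rw [← sum_subset (subset_univ (F.powerset.image (· ∪ Fᶜ))), sum_image hinj]
  · refine sum_congr rfl fun R hR ↦ ?_
    have hRF : R ⊆ F := mem_powerset.1 hR
    have hcard : #(R ∪ Fᶜ) = #R + (d - #F) := by
      rw [card_union_of_disjoint (disjoint_left.2 fun k hk hk' ↦ mem_compl.1 hk' (hRF hk)),
        card_compl, Fintype.card_fin]
    have hRF' := card_le_card hRF
    have hF : #F ≤ d := by simpa using card_le_univ F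
    rw [hcard, show d - (#R + (d - #F)) = #F - #R by omega]
  · intro S _ hS
    obtain ⟨k, hkF, hkS⟩ : ∃ k ∉ F, k ∉ S := by
      by_contra! h
      exact hS (mem_image.2 ⟨S ∩ F, mem_powerset.2 inter_subset_right, by
        ext k; by_cases hk : k ∈ F <;> simp [hk, h k]⟩)
    rw [hC.1 _ (fun i ↦ by split_ifs; exacts [hb i trivial, ha i trivial])
      ⟨k, by simp [hkS, haF k hkF]⟩, mul_zero]

theorem two_increasing (hC : IsCopula d C) {u : Fin d → ℝ} (hu : u ∈ 𝕀)
    {i j : Fin d} (hij : i ≠ j) {x x' y y' : ℝ} (hx : 0 ≤ x) (hxx' : x ≤ x') (hx' : x' ≤ 1)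
    (hy : 0 ≤ y) (hyy' : y ≤ y') (hy' : y' ≤ 1) :
    C (update (update u i x') j y) - C (update (update u i x) j y) ≤
      C (update (update u i x') j y') - C (update (update u i x) j y') := by
  set a : Fin d → ℝ := update (update 0 i x) j y
  set b : Fin d → ℝ := update (update u i x') j y'
  have h0 : (0 : Fin d → ℝ) ∈ 𝕀 := fun _ _ ↦ ⟨le_rfl, zero_le_one⟩
  have ha : a ∈ 𝕀 :=
    Set.update_mem_univ_pi (Set.update_mem_univ_pi h0 ⟨hx, hxx'.trans hx'⟩) ⟨hy, hyy'.trans hy'⟩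
  have hb : b ∈ 𝕀 := Set.update_mem_univ_pi (Set.update_mem_univ_pi hu
    ⟨hx.trans hxx', hx'⟩) ⟨hy.trans hyy', hy'⟩
  have hab : a ≤ b := update_le_update_iff.2 ⟨hyy', fun k _ ↦
    update_le_update_iff.2 ⟨hxx', fun k _ ↦ (hu k trivial).1⟩ k⟩
  have vertex : ∀ R ⊆ ({i, j} : Finset (Fin d)), (fun k ↦ if k ∈ R ∪ {i, j}ᶜ then b k else a k) =
      update (update u i (if i ∈ R then x' else x)) j (if j ∈ R then y' else y) := by
    intro R hR; ext k
    by_cases hki : k = i <;> by_cases hkj : k = j <;> simp_all [a, b]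
  have hvol := hC.2.2 a b (Set.mem_univ_pi.1 ha) (Set.mem_univ_pi.1 hb) hab
  rw [hC.volume_eq_sum_powerset ha hb {i, j} (fun k hk ↦ by simp_all [a, update_apply]),
    sum_congr rfl fun R hR ↦ by rw [vertex R (mem_powerset.1 hR)]] at hvol
  rw [sum_powerset_insert (by simpa using hij), ← insert_empty (a := j),
    sum_powerset_insert (notMem_empty j), sum_powerset_insert (notMem_empty j)] at hvol
  simp only [powerset_empty, insert_empty_eq, mem_singleton, hij, hij.symm, not_false_eq_true,
    card_insert_of_notMem, card_singleton, Nat.reduceAdd, sum_singleton, card_empty, tsub_zero,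
    even_two, Even.neg_pow, one_pow, notMem_empty, ↓reduceIte, one_mul, mem_insert, false_or,
    true_or, or_true, Nat.add_one_sub_one, pow_one, neg_mul, tsub_self, pow_zero] at hvol
  linarith

theorem apply_update_one (hC : IsCopula d C) (i : Fin d) {x : ℝ} (hx : x ∈ Set.Icc 0 1) :
    C (update 1 i x) = x := by
  have h1 : (1 : Fin d → ℝ) ∈ 𝕀 := fun _ _ ↦ ⟨zero_le_one, le_rfl⟩
  rw [hC.2.1 _ (Set.mem_univ_pi.1 (Set.update_mem_univ_pi h1 hx)) i fun j hj ↦ by simp [hj],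
    update_self]

theorem monotoneOn (hC : IsCopula d C) (hd : 2 ≤ d) : MonotoneOn C 𝕀 := by
  have : Nontrivial (Fin d) := Fin.nontrivial_iff_two_le.2 hd
  refine monotoneOn_univ_pi_of_update fun v hv i x hx y hy hxy ↦ ?_
  obtain ⟨j, hji⟩ := exists_ne i
  have restore : ∀ z, update (update v i z) j (v j) = update v i z := fun z ↦ by
    rw [← update_of_ne hji z v, update_eq_self]
  have vanish : ∀ z ∈ Set.Icc (0 : ℝ) 1, C (update (update v i z) j 0) = 0 := fun z hz ↦
    hC.1 _ (Set.mem_univ_pi.1 (Set.update_mem_univ_pi (Set.update_mem_univ_pi hv hz)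
      ⟨le_rfl, zero_le_one⟩)) ⟨j, update_self ..⟩
  have h := hC.two_increasing hv hji.symm hx.1 hxy hy.2 le_rfl (hv j trivial).1 (hv j trivial).2
  rw [vanish x hx, vanish y hy, restore, restore] at h
  linarith

theorem apply_update_sub_apply_update_le (hC : IsCopula d C) {v : Fin d → ℝ} (hv : v ∈ 𝕀)
    (i : Fin d) {x y : ℝ} (hx : x ∈ Set.Icc (0 : ℝ) 1) (hy : y ∈ Set.Icc (0 : ℝ) 1)
    (hxy : x ≤ y) :
    C (update v i y) - C (update v i x) ≤ y - x := by
  have hmono : MonotoneOn (fun w ↦ C (update w i y) - C (update w i x)) 𝕀 := by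
    refine monotoneOn_univ_pi_of_update fun w hw j s hs t ht hst ↦ ?_
    rcases eq_or_ne j i with rfl | hji
    · simp only [update_idem, le_refl]
    · simp only [update_comm hji]
      exact hC.two_increasing hw hji.symm hx.1 hxy hy.2 hs.1 hst ht.2
  have h1 : (1 : Fin d → ℝ) ∈ 𝕀 := fun _ _ ↦ ⟨zero_le_one, le_rfl⟩
  have := hmono hv h1 fun k ↦ (hv k trivial).2
  simpa only [hC.apply_update_one i hx, hC.apply_update_one i hy] using this

/-- Equivalently, `C v' - C v ≤ ∑ k, (v' k - v k)` whenever `v ≤ v'` in the cube. -/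
theorem monotoneOn_sum_sub (hC : IsCopula d C) :
    MonotoneOn (fun v ↦ ∑ k, v k - C v) 𝕀 :=
  monotoneOn_univ_pi_of_update fun v hv j x hx y hy hxy ↦ by
    have := hC.apply_update_sub_apply_update_le hv j hx hy hxy
    simp only [sum_update_of_mem (mem_univ j)]
    linarith

theorem mem_Icc_of_forall_le (hC : IsCopula d C) (hd : 2 ≤ d) {v : Fin d → ℝ} (hv : v ∈ 𝕀)
    {i : Fin d} (hi : ∀ k, v i ≤ v k) :
    C v ∈ Set.Icc (max 0 (∑ k, v k - (d - 1))) (v i) ∧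
      C v ∈ Set.Icc (C fun _ ↦ v i) (C (fun _ ↦ v i) + (∑ k, v k - d * v i)) := by
  have h0 : (0 : Fin d → ℝ) ∈ 𝕀 := fun _ _ ↦ ⟨le_rfl, zero_le_one⟩
  have h1 : (1 : Fin d → ℝ) ∈ 𝕀 := fun _ _ ↦ ⟨zero_le_one, le_rfl⟩
  have hm : (fun _ : Fin d ↦ v i) ∈ 𝕀 := fun _ _ ↦ hv i trivial
  have hC0 : C 0 = 0 := hC.1 0 (Set.mem_univ_pi.1 h0) ⟨⟨0, by omega⟩, rfl⟩
  have hC1 : C 1 = 1 := by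
    simpa using hC.apply_update_one ⟨0, by omega⟩ (x := 1) ⟨zero_le_one, le_rfl⟩
  have hnonneg := hC.monotoneOn hd h0 hv fun k ↦ (hv k trivial).1
  have hupper := hC.monotoneOn hd hv (Set.update_mem_univ_pi (i := i) h1 (hv i trivial))
    (le_update_iff.2 ⟨le_rfl, fun k _ ↦ (hv k trivial).2⟩)
  have hlower := hC.monotoneOn_sum_sub hv h1 fun k ↦ (hv k trivial).2
  have hmono := hC.monotoneOn hd hm hv hi
  have hlip := hC.monotoneOn_sum_sub hm hv hi
  rw [hC0] at hnonneg
  rw [hC.apply_update_one i (hv i trivial)] at hupper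
  simp only [hC1, Pi.one_apply, sum_const, card_univ, Fintype.card_fin, nsmul_eq_mul, mul_one]
    at hlower hlip
  exact ⟨⟨max_le hnonneg (by linarith), hupper⟩, hmono, by linarith⟩

end IsCopula

theorem main_bound (d : ℕ) (hd : 2 ≤ d)
    (C : (Fin d → ℝ) → ℝ) (hC : IsCopula d C)
    (u : Fin d → ℝ) (hu : ∀ i, u i ∈ Set.Icc (0:ℝ) 1)
    (π : Equiv.Perm (Fin d)) :
    |C u - C (u ∘ π)| ≤ ((d : ℝ) - 1) / ((d : ℝ) + 1) := by
  obtain ⟨i₀, -, hmin⟩ := exists_min_image univ u (univ_nonempty_iff.2 ⟨⟨0, by omega⟩⟩)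
  obtain ⟨hu₁, hu₂⟩ :=
    hC.mem_Icc_of_forall_le hd (Set.mem_univ_pi.2 hu) fun k ↦ hmin k (mem_univ k)
  obtain ⟨hπ₁, hπ₂⟩ := hC.mem_Icc_of_forall_le hd (v := u ∘ π) (fun k _ ↦ hu (π k))
    (i := π.symm i₀) fun k ↦ by simpa using hmin (π k) (mem_univ _)
  simp only [comp_apply, Equiv.apply_symm_apply, Equiv.sum_comp π u] at hπ₁ hπ₂
  rw [← Real.dist_eq]
  calc dist (C u) (C (u ∘ π))
      ≤ min (u i₀ - max 0 (∑ k, u k - (d - 1))) (∑ k, u k - d * u i₀) :=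
        le_min (Real.dist_le_of_mem_Icc hu₁ hπ₁) (by simpa using Real.dist_le_of_mem_Icc hu₂ hπ₂)
    _ ≤ ((d : ℝ) - 1) / ((d : ℝ) + 1) :=
        min_sub_max_le_div (by exact_mod_cast (by omega : 1 ≤ d)) _ _
end

section
/- Let d ≥ 2. Define u* ∈ [0,1]^d by u*_j = (d−1)/(d+1) for 1 ≤ j ≤ (d+1)/2, u*_j = d/(d+1) if j = d/2 + 1 and d is even, and u*_j = 1 otherwise. Then the function C* : [0,1]^d → ℝ defined by C*(u) = Σ_{j=0}^{d−1} min_{k=0}^{d−1} ( u_{((j+k) mod d)+1} − Σ_{i=1, i∉I(j,k)}^{d} (1 − u*_i) )^+, where I(j,k) = { ((j+l) mod d) + 1 : l = 0,1,…,k }, is a d-copula. -/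
/-- The extremal point `u*`: `u*_j = (d-1)/(d+1)` for `1 ≤ j ≤ (d+1)/2`,
`u*_j = d/(d+1)` if `j = d/2 + 1` and `d` is even, and `u*_j = 1` otherwise
(0-indexed here). -/
noncomputable def uStar (d : ℕ) : Fin d → ℝ := fun i =>
  if 2 * ((i : ℕ) + 1) ≤ d + 1 then ((d : ℝ) - 1) / ((d : ℝ) + 1)
  else if d % 2 = 0 ∧ (i : ℕ) = d / 2 then (d : ℝ) / ((d : ℝ) + 1)
  else 1

/-- The index set `I(j,k) = {((j+l) mod d) + 1 : l = 0,…,k}` (0-indexed here). -/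
def Iset (d : ℕ) (hd : 0 < d) (j k : ℕ) : Finset (Fin d) :=
  (Finset.range (k + 1)).image fun l => (⟨(j + l) % d, Nat.mod_lt _ hd⟩ : Fin d)

/-- The extremal function
`C*(u) = Σ_{j=0}^{d−1} min_{k=0}^{d−1} ( u_{((j+k) mod d)+1} − Σ_{i∉I(j,k)} (1 − u*_i) )^+`
(0-indexed here). -/
noncomputable def CStar (d : ℕ) (hd : 0 < d) (u : Fin d → ℝ) : ℝ :=
  ∑ j ∈ Finset.range d,
    (Finset.Icc 0 (d - 1)).inf' (Finset.nonempty_Icc.mpr (Nat.zero_le _))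
      fun k =>
        max (u ⟨(j + k) % d, Nat.mod_lt _ hd⟩ -
          ∑ i ∈ Finset.univ \ Iset d hd j k, (1 - uStar d i)) 0

/-!
Put `v = 1 - u*`. Each summand of `C*` has the form `u ↦ min_k f_k(u_{j+k})` with every `f_k`
nondecreasing, and by inclusion–exclusion over the coordinates the volume of such a function
over a box `[a, b]` is `(min_k f_k(b_{j+k}) - max_k f_k(a_{j+k}))^+ ≥ 0`; so `C*` is
`d`-increasing. The complement sums in `C*` equal `1 - V(j,k)`, where `V(j,k) ≤ 1` is the
`v`-mass of the cyclic arc `I(j,k)`. If `u_i = 0`, the `j`-th summand vanishes at the `k` with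
`j + k = i`. If every coordinate except `u_i` equals `1`, the `j`-th summand is
`min(v_j, (V_j - (1 - u_i))^+)`, with `V_j` the mass of the arc from `j` to `i`; listing the `j`
backwards from `i` turns the `V_j` into the partial sums of `v`, and the sum telescopes to
`(1 - (1 - u_i))^+ = u_i`. This works for any weights `v ≥ 0` with `∑ v = 1`; for `u*` these
hold because `1 - u*_i` is the difference of consecutive terms of `max(d + 1 - 2i, 0) / (d + 1)`.
-/

open Finset

theorem max_min_sub_zero_sub_max_min_sub_zero {M X Y B : ℝ} (h : Y ≤ X) :
    max (min M X - B) 0 - max (min M Y - B) 0 = max (min M X - max Y B) 0 := by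
  simp only [min_def, max_def]; split_ifs <;> linarith

section AlternatingSum

variable {ι : Type*} [DecidableEq ι]

-- The cap `c` makes the identity inductive: splitting off an element `a` of `s` moves the
-- `a`-th entry into the cap.
theorem sum_powerset_neg_one_pow_mul_min_inf'_ite {s : Finset ι} (hs : s.Nonempty)
    {X Y : ι → ℝ} (hYX : ∀ k ∈ s, Y k ≤ X k) (c : ℝ) :
    ∑ T ∈ s.powerset,
        (-1 : ℝ) ^ (#s - #T) * min c (s.inf' hs fun k => if k ∈ T then X k else Y k)
      = max (min c (s.inf' hs X) - s.sup' hs Y) 0 := by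
  induction hs using Finset.Nonempty.cons_induction generalizing c with
  | singleton a =>
    have hYXa := hYX a (mem_singleton_self a)
    simp only [inf'_singleton, sup'_singleton, card_singleton]
    rw [← insert_empty, sum_powerset_insert (notMem_empty a)]
    simp only [powerset_empty, sum_singleton, card_singleton, card_empty, insert_empty,
      mem_singleton, notMem_empty, if_true, if_false]
    simp only [min_def, max_def]; split_ifs <;> norm_num <;> linarith
  | cons a s ha hs ih =>
    simp only [cons_eq_insert] at hYX ⊢
    have hYXa := hYX a (mem_insert_self a s)
    have ih' := fun c => ih (fun k hk => hYX k (mem_insert_of_mem hk)) c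
    set Z : Finset ι → ι → ℝ := fun T k => if k ∈ T then X k else Y k
    have pair : ∀ T ∈ s.powerset,
        (-1 : ℝ) ^ (#(insert a s) - #T) * min c ((insert a s).inf' (insert_nonempty a s) (Z T))
          + (-1) ^ (#(insert a s) - #(insert a T)) *
            min c ((insert a s).inf' (insert_nonempty a s) (Z (insert a T)))
        = (-1) ^ (#s - #T) * min (min c (X a)) (s.inf' hs (Z T))
          - (-1) ^ (#s - #T) * min (min c (Y a)) (s.inf' hs (Z T)) := by
      intro T hT
      have hTs := mem_powerset.mp hT
      have haT : a ∉ T := fun h => ha (hTs h)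
      have hcard := card_le_card hTs
      have hZ : s.inf' hs (Z (insert a T)) = s.inf' hs (Z T) :=
        inf'_congr hs rfl fun k hk => by
          simp only [Z, mem_insert, show k ≠ a from fun h => ha (h ▸ hk), false_or]
      rw [card_insert_of_notMem ha, card_insert_of_notMem haT, inf'_insert hs, inf'_insert hs,
        hZ, show #s + 1 - #T = #s - #T + 1 by omega, Nat.add_sub_add_right]
      simp only [Z, mem_insert_self, if_true, haT, if_false, ← min_assoc, pow_succ]
      ring
    rw [sum_powerset_insert ha, ← sum_add_distrib, sum_congr rfl pair, sum_sub_distrib, ih', ih',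
      inf'_insert hs, sup'_insert hs, min_right_comm c (X a), min_right_comm c (Y a),
      max_min_sub_zero_sub_max_min_sub_zero hYXa, ← min_assoc, min_right_comm c (X a)]

theorem sum_neg_one_pow_mul_inf'_nonneg [Fintype ι] [Nonempty ι] {f : ι → ℝ → ℝ}
    (hf : ∀ k, Monotone (f k)) {a b : ι → ℝ} (hab : a ≤ b) :
    0 ≤ ∑ S : Finset ι, (-1 : ℝ) ^ (Fintype.card ι - #S) *
      univ.inf' univ_nonempty (fun k => f k (if k ∈ S then b k else a k)) := by
  have key := sum_powerset_neg_one_pow_mul_min_inf'_ite univ_nonempty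
    (X := fun k => f k (b k)) (Y := fun k => f k (a k)) (fun k _ => hf k (hab k))
    (univ.inf' univ_nonempty fun k => f k (b k))
  rw [powerset_univ, card_univ] at key
  refine (le_max_right _ _).trans_eq (key.symm.trans (sum_congr rfl fun S _ => ?_))
  simp only [apply_ite (f _)]
  refine congrArg _ (min_eq_right (inf'_mono_fun fun k _ => ?_))
  split_ifs
  exacts [le_rfl, hf k (hab k)]

end AlternatingSum

theorem min_max_add_zero_eq_sub {g : ℝ} (hg : 0 ≤ g) (x : ℝ) :
    min g (max (x + g) 0) = max (x + g) 0 - max x 0 := by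
  simp only [min_def, max_def]; split_ifs <;> linarith

theorem sum_range_min_max_sub_zero {g : ℕ → ℝ} (hg : ∀ r, 0 ≤ g r) (B : ℝ) (n : ℕ) :
    ∑ r ∈ range n, min (g r) (max (∑ s ∈ range (r + 1), g s - B) 0)
      = max (∑ s ∈ range n, g s - B) 0 - max (-B) 0 := by
  have step : ∀ r, min (g r) (max (∑ s ∈ range (r + 1), g s - B) 0)
      = max (∑ s ∈ range (r + 1), g s - B) 0 - max (∑ s ∈ range r, g s - B) 0 := fun r => by
    rw [sum_range_succ, add_sub_right_comm, min_max_add_zero_eq_sub (hg r)]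
  simp only [step, sum_range_sub (fun r => max (∑ s ∈ range r, g s - B) 0), sum_range_zero,
    zero_sub]

theorem Finset.inf'_univ_comp_equiv {ι κ α : Type*} [Fintype ι] [Fintype κ] [Nonempty ι]
    [Nonempty κ] [SemilatticeInf α] (e : ι ≃ κ) (f : κ → α) :
    univ.inf' univ_nonempty (fun i => f (e i)) = univ.inf' univ_nonempty f := by
  simp only [← map_univ_equiv e, inf'_map]
  rfl

theorem uStar_le_one (d : ℕ) (i : Fin d) : uStar d i ≤ 1 := by
  have hd : (0 : ℝ) < d + 1 := by positivity
  unfold uStar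
  split_ifs
  · rw [div_le_one hd]; linarith
  · rw [div_le_one hd]; linarith
  · rfl

theorem one_sub_uStar (d : ℕ) (i : Fin d) :
    1 - uStar d i
      = (max ((d : ℝ) + 1 - 2 * i) 0 - max ((d : ℝ) + 1 - 2 * (i + 1 : ℕ)) 0) / (d + 1) := by
  have hd : (d : ℝ) + 1 ≠ 0 := by positivity
  unfold uStar
  split_ifs with h₁ h₂
  · have h : (2 * (i + 1 : ℕ) : ℝ) ≤ d + 1 := by exact_mod_cast h₁
    push_cast at h
    rw [max_eq_left (by linarith), max_eq_left (by push_cast; linarith)]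
    field_simp; push_cast; ring
  · have h : (2 * i : ℝ) = d := by exact_mod_cast (by omega : 2 * (i : ℕ) = d)
    rw [max_eq_left (by linarith), max_eq_right (by push_cast; linarith)]
    field_simp; linarith
  · have h : (d : ℝ) + 1 ≤ 2 * i := by exact_mod_cast (by omega : d + 1 ≤ 2 * (i : ℕ))
    rw [max_eq_right (by linarith), max_eq_right (by push_cast; linarith)]
    simp

theorem sum_one_sub_uStar (d : ℕ) [NeZero d] : ∑ i : Fin d, (1 - uStar d i) = 1 := by
  have hd : (1 : ℝ) ≤ d := by exact_mod_cast NeZero.one_le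
  simp only [one_sub_uStar]
  rw [Fin.sum_univ_eq_sum_range (fun i => (max ((d : ℝ) + 1 - 2 * i) 0
    - max ((d : ℝ) + 1 - 2 * (i + 1 : ℕ)) 0) / (d + 1)), ← sum_div, sum_range_sub', Nat.cast_zero, mul_zero, sub_zero, max_eq_left (by linarith), max_eq_right (by linarith),
    sub_zero, div_self (by positivity)]

section CyclicArcs

-- `ℕ → Fin d` casts reduce modulo `d`, which is the cyclic indexing `(j + l) mod d` of `C*`.
open Fin.CommRing

variable {d : ℕ} [NeZero d]

def arcSum (v : Fin d → ℝ) (j : Fin d) (k : ℕ) : ℝ :=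
  ∑ l ∈ range (k + 1), v (j + (l : Fin d))

variable {v : Fin d → ℝ}

theorem arcSum_zero (j : Fin d) : arcSum v j 0 = v j := by
  simp [arcSum]

theorem arcSum_mono (hv : 0 ≤ v) (j : Fin d) : Monotone (arcSum v j) := fun _ _ h =>
  sum_le_sum_of_subset_of_nonneg (range_subset_range.2 (by omega)) fun _ _ _ => hv _

theorem arcSum_pred_eq_sum (j : Fin d) : arcSum v j (d - 1) = ∑ i, v i := by
  rw [arcSum, Nat.sub_add_cancel NeZero.one_le,
    ← Fin.sum_univ_eq_sum_range fun l : ℕ => v (j + (l : Fin d))]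
  simp only [Fin.cast_val_eq_self]
  exact Fintype.sum_equiv (Equiv.addLeft j) _ _ fun _ => rfl

theorem arcSum_sub_eq_sum_range_sub (i : Fin d) (r : ℕ) :
    arcSum v (i - (r : Fin d)) r = ∑ s ∈ range (r + 1), v (i - (s : Fin d)) := by
  rw [arcSum, ← sum_range_reflect]
  refine sum_congr rfl fun l hl => ?_
  rw [Nat.add_sub_cancel, Nat.cast_sub (by simp at hl; omega)]
  abel_nf

theorem arcSum_le_one (hv : 0 ≤ v) (hsum : ∑ i, v i = 1) (j k : Fin d) : arcSum v j k ≤ 1 :=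
  calc arcSum v j k ≤ arcSum v j (d - 1) := arcSum_mono hv j (by omega)
    _ = 1 := by rw [arcSum_pred_eq_sum, hsum]

noncomputable def arcCopula (v u : Fin d → ℝ) : ℝ :=
  ∑ j, univ.inf' univ_nonempty fun k : Fin d => max (u (j + k) - (1 - arcSum v j k)) 0

theorem arcCopula_eq_zero (hv : 0 ≤ v) (hsum : ∑ i, v i = 1) {u : Fin d → ℝ} {i : Fin d}
    (hi : u i = 0) : arcCopula v u = 0 := by
  refine sum_eq_zero fun j _ => le_antisymm ?_ (le_inf' _ _ fun k _ => le_max_right _ _)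
  calc _ ≤ max (u (j + (i - j)) - (1 - arcSum v j (i - j : Fin d))) 0 :=
      inf'_le _ (mem_univ (i - j))
    _ = 0 := by
      rw [add_sub_cancel, hi, max_eq_right]
      linarith [arcSum_le_one hv hsum j (i - j)]

theorem inf'_arc_of_forall_ne_eq_one (hv : 0 ≤ v) {u : Fin d → ℝ} (hu : ∀ j, u j ≤ 1)
    {i : Fin d} (hi : ∀ j ≠ i, u j = 1) (j : Fin d) :
    univ.inf' univ_nonempty (fun k : Fin d => max (u (j + k) - (1 - arcSum v j k)) 0)
      = min (v j) (max (arcSum v j (i - j : Fin d) - (1 - u i)) 0) := by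
  refine le_antisymm (le_min ?_ ?_) (le_inf' _ _ fun k _ => ?_)
  · calc _ ≤ max (u (j + 0) - (1 - arcSum v j (0 : Fin d))) 0 :=
          inf'_le _ (mem_univ (0 : Fin d))
      _ ≤ v j := by
        rw [Fin.val_zero, arcSum_zero, add_zero]
        exact max_le (by linarith [hu j]) (hv j)
  · calc _ ≤ max (u (j + (i - j)) - (1 - arcSum v j (i - j : Fin d))) 0 :=
          inf'_le _ (mem_univ (i - j))
      _ = _ := by rw [add_sub_cancel]; congr 1; ring
  · by_cases hk : k = i - j
    · subst hk
      rw [add_sub_cancel]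
      exact (min_le_right _ _).trans_eq (by congr 1; ring)
    · rw [hi (j + k) fun h => hk (eq_sub_of_add_eq' h), sub_sub_cancel]
      calc min (v j) _ ≤ v j := min_le_left _ _
        _ = arcSum v j 0 := (arcSum_zero j).symm
        _ ≤ arcSum v j k := arcSum_mono hv j (Nat.zero_le _)
        _ ≤ max _ 0 := le_max_left _ _

theorem arcCopula_of_forall_ne_eq_one (hv : 0 ≤ v) (hsum : ∑ i, v i = 1) {u : Fin d → ℝ}
    (hu : ∀ j, u j ≤ 1) {i : Fin d} (hui : 0 ≤ u i) (hi : ∀ j ≠ i, u j = 1) :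
    arcCopula v u = u i := by
  have hrev : ∑ s ∈ range d, v (i - s) = 1 := by
    rw [← Fin.sum_univ_eq_sum_range (fun s : ℕ => v (i - s)), ← hsum]
    simp only [Fin.cast_val_eq_self]
    exact Fintype.sum_equiv (Equiv.subLeft i) _ _ fun _ => rfl
  calc arcCopula v u
      = ∑ j, min (v j) (max (arcSum v j (i - j : Fin d) - (1 - u i)) 0) :=
        sum_congr rfl fun j _ => inf'_arc_of_forall_ne_eq_one hv hu hi j
    _ = ∑ r : Fin d, min (v (i - r)) (max (arcSum v (i - r) r - (1 - u i)) 0) :=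
        (Fintype.sum_equiv (Equiv.subLeft i) _ _ fun r => by simp [sub_sub_cancel]).symm
    _ = ∑ r ∈ range d,
          min (v (i - r)) (max (∑ s ∈ range (r + 1), v (i - s) - (1 - u i)) 0) := by
        rw [← Fin.sum_univ_eq_sum_range]
        refine sum_congr rfl fun r _ => ?_
        rw [← arcSum_sub_eq_sum_range_sub, Fin.cast_val_eq_self]
    _ = u i := by
        rw [sum_range_min_max_sub_zero (fun s => hv _), hrev, sub_sub_cancel, max_eq_left hui,
          max_eq_right (by linarith [hu i]), sub_zero]

theorem arcCopula_volume_nonneg (v : Fin d → ℝ) {a b : Fin d → ℝ} (hab : a ≤ b) :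
    0 ≤ ∑ S : Finset (Fin d),
      (-1 : ℝ) ^ (d - #S) * arcCopula v (fun k => if k ∈ S then b k else a k) := by
  simp only [arcCopula, mul_sum]
  rw [sum_comm]
  refine sum_nonneg fun j _ => ?_
  have := sum_neg_one_pow_mul_inf'_nonneg
    (f := fun i x => max (x - (1 - arcSum v j (i - j : Fin d))) 0)
    (fun i _ _ h => max_le_max (by linarith) le_rfl) hab
  rw [Fintype.card_fin] at this
  refine this.trans_eq (sum_congr rfl fun S _ => ?_)
  rw [← inf'_univ_comp_equiv (Equiv.addLeft j)]
  simp only [Equiv.coe_addLeft, add_sub_cancel_left]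
  rfl

theorem arcCopula_isCopula (hv : 0 ≤ v) (hsum : ∑ i, v i = 1) : IsCopula d (arcCopula v) :=
  ⟨fun _ _ ⟨_, hi⟩ => arcCopula_eq_zero hv hsum hi,
    fun _ hu i hi => arcCopula_of_forall_ne_eq_one hv hsum (fun j => (hu j).2) (hu i).1 hi,
    fun _ _ _ _ hab => arcCopula_volume_nonneg v hab⟩

theorem sum_Iset_eq_arcSum (v : Fin d → ℝ) (j : Fin d) {k : ℕ} (hk : k < d) :
    ∑ i ∈ Iset d (NeZero.pos d) j k, v i = arcSum v j k := by
  have hshift : (fun l => (⟨(j + l) % d, Nat.mod_lt _ (NeZero.pos d)⟩ : Fin d))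
      = fun l : ℕ => j + (l : Fin d) := by
    funext l; ext; simp [Fin.val_add]
  rw [Iset, hshift, sum_image fun l hl l' hl' h => ?_, arcSum]
  simp only [coe_range, Set.mem_Iio] at hl hl'
  have := congrArg Fin.val (add_left_cancel h)
  simp only [Fin.val_natCast] at this
  rwa [Nat.mod_eq_of_lt (by omega), Nat.mod_eq_of_lt (by omega)] at this

theorem CStar_eq_arcCopula (d : ℕ) [NeZero d] :
    CStar d (NeZero.pos d) = arcCopula fun i => 1 - uStar d i := by
  funext u
  have hcompl (j k : Fin d) : ∑ x ∈ univ \ Iset d (NeZero.pos d) j k, (1 - uStar d x)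
      = 1 - arcSum (fun i => 1 - uStar d i) j k := by
    rw [← sum_Iset_eq_arcSum _ j k.isLt, eq_sub_iff_add_eq, sum_sdiff (subset_univ _),
      sum_one_sub_uStar]
  have hIcc : Icc 0 (d - 1) = (univ : Finset (Fin d)).map Fin.valEmbedding := by
    rw [Fin.map_valEmbedding_univ]
    ext
    simp only [mem_Icc, mem_Iio]
    have := NeZero.pos d
    omega
  rw [CStar, sum_range, arcCopula]
  refine sum_congr rfl fun j _ => ?_
  rw [inf'_congr _ hIcc fun _ _ => rfl, inf'_map]
  refine inf'_congr _ rfl fun k _ => ?_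
  simp only [Function.comp_apply, Fin.valEmbedding_apply, hcompl]
  rw [show (⟨(j + k) % d, Nat.mod_lt _ (NeZero.pos d)⟩ : Fin d) = j + k from
    Fin.ext (Fin.val_add j k).symm]

end CyclicArcs

/-- The function `C*` is a `d`-copula. -/
theorem CStar_isCopula (d : ℕ) (hd : 2 ≤ d) :
    IsCopula d (CStar d (by omega)) := by
  have : NeZero d := ⟨by omega⟩
  rw [CStar_eq_arcCopula]
  exact arcCopula_isCopula (fun i => sub_nonneg.2 (uStar_le_one d i)) (sum_one_sub_uStar d)
end

section
/- Let d = 2n with n ≥ 2 be even and let u ∈ [0,1]^d satisfy u_1 = ⋯ = u_n = (d−1)/(d+1) and u_{n+j} = d/(d+1) + δ_j for j = 1,…,n, where 0 ≤ δ_1 ≤ ⋯ ≤ δ_n ≤ 1/(d+1) and Σ_{j=1}^n δ_j = (n−1)/(d+1). Then there exist a d-copula C and a permutation π ∈ S_d such that |C(u) − C(u_π)| = (d−1)/(d+1); in particular the order-reversing permutation π(j) = d − j + 1 can be taken. -/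
open MeasureTheory Set
open scoped Finset

noncomputable section

theorem prod_sub_eq_sum_ite {ι R : Type*} [Fintype ι] [DecidableEq ι] [CommRing R]
    (f g : ι → R) :
    ∏ i, (f i - g i) =
      ∑ S : Finset ι, (-1) ^ (Fintype.card ι - #S) * ∏ i, if i ∈ S then f i else g i := by
  rw [Finset.prod_sub, Finset.powerset_univ]
  refine Fintype.sum_equiv compl_involutive.toPerm _ _ fun T => ?_
  rw [Function.Involutive.coe_toPerm, Finset.prod_ite, Finset.card_compl,
    Nat.sub_sub_self (Finset.card_le_univ T), ← Finset.compl_eq_univ_sdiff, mul_assoc]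
  congr 3 <;> ext <;> simp

section JointCDF

variable {Ω : Type*} [MeasurableSpace Ω] (μ : Measure Ω) {d : ℕ} {U : Fin d → Ω → ℝ}

def jointCDF (U : Fin d → Ω → ℝ) (v : Fin d → ℝ) : ℝ :=
  μ.real {ω | ∀ i, U i ω ≤ v i}

theorem jointCDF_eq_integral_prod_indicator (hU : ∀ i, Measurable (U i))
    (v : Fin d → ℝ) : jointCDF μ U v = ∫ ω, ∏ i, {ω | U i ω ≤ v i}.indicator 1 ω ∂μ := by
  have hmeas : MeasurableSet {ω | ∀ i, U i ω ≤ v i} := by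
    simp only [ofPred_forall]
    exact MeasurableSet.iInter fun i => measurableSet_le (hU i) measurable_const
  rw [jointCDF, ← integral_indicator_one hmeas]
  congr 1; ext ω
  simp [prod_indicator_const_apply, ofPred_forall]

theorem jointCDF_eq_zero (hunif : ∀ i, ∀ x ∈ Icc (0 : ℝ) 1, μ {ω | U i ω ≤ x} = ENNReal.ofReal x)
    {v : Fin d → ℝ} {i : Fin d} (hi : v i = 0) : jointCDF μ U v = 0 := by
  have hnull : μ {ω | U i ω ≤ 0} = 0 := by rw [hunif i 0 (by simp), ENNReal.ofReal_zero]
  have hsub : {ω | ∀ j, U j ω ≤ v j} ⊆ {ω | U i ω ≤ 0} := fun ω hω => hi ▸ hω i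
  rw [jointCDF, measureReal_def, measure_mono_null hsub hnull, ENNReal.toReal_zero]

theorem jointCDF_eq_of_forall_ne [IsProbabilityMeasure μ] (hU : ∀ i, Measurable (U i))
    (hunif : ∀ i, ∀ x ∈ Icc (0 : ℝ) 1, μ {ω | U i ω ≤ x} = ENNReal.ofReal x)
    {v : Fin d → ℝ} {i : Fin d} (hvi : v i ∈ Icc (0 : ℝ) 1) (hv : ∀ j, j ≠ i → v j = 1) :
    jointCDF μ U v = v i := by
  have hone : ∀ᵐ ω ∂μ, ∀ j, U j ω ≤ 1 := ae_all_iff.2 fun j => by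
    rw [ae_iff, ← compl_ofPred,
      prob_compl_eq_zero_iff (measurableSet_le (hU j) measurable_const), hunif j 1 (by simp),
      ENNReal.ofReal_one]
  calc jointCDF μ U v = μ.real {ω | U i ω ≤ v i} := by
        refine measureReal_congr (hone.mono fun ω hω => propext ⟨fun h => h i, fun h j => ?_⟩)
        by_cases hj : j = i
        · exact hj ▸ h
        · exact (hv j hj).symm ▸ hω j
    _ = v i := by rw [measureReal_def, hunif i _ hvi, ENNReal.toReal_ofReal hvi.1]

theorem sum_neg_one_pow_mul_jointCDF_nonneg [IsFiniteMeasure μ] (hU : ∀ i, Measurable (U i))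
    {a b : Fin d → ℝ} (hab : ∀ i, a i ≤ b i) :
    0 ≤ ∑ S : Finset (Fin d),
      (-1 : ℝ) ^ (d - #S) * jointCDF μ U (fun k => if k ∈ S then b k else a k) := by
  have hcorner : ∀ (S : Finset (Fin d)) i ω,
      (if i ∈ S then {ω | U i ω ≤ b i}.indicator (1 : Ω → ℝ) ω
        else {ω | U i ω ≤ a i}.indicator 1 ω)
        = {ω | U i ω ≤ if i ∈ S then b i else a i}.indicator 1 ω := fun S i ω => by
    split_ifs <;> rfl
  have hint : ∀ S : Finset (Fin d), Integrable (fun ω => ∏ i,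
      {ω | U i ω ≤ if i ∈ S then b i else a i}.indicator (1 : Ω → ℝ) ω) μ := fun S => by
    simp only [prod_indicator_const_apply, one_pow]
    exact (integrable_const 1).indicator
      (Finset.measurableSet_biInter _ fun i _ => measurableSet_le (hU i) measurable_const)
  calc (0 : ℝ)
      ≤ ∫ ω, ∏ i, ({ω | U i ω ≤ b i}.indicator 1 ω - {ω | U i ω ≤ a i}.indicator 1 ω) ∂μ :=
        integral_nonneg fun ω => Finset.prod_nonneg fun i _ => sub_nonneg.2 <|
          indicator_le_indicator_of_subset (fun ω (h : U i ω ≤ a i) => h.trans (hab i))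
            (fun _ => zero_le_one) ω
    _ = ∑ S : Finset (Fin d), ∫ ω, (-1) ^ (d - #S) *
          ∏ i, {ω | U i ω ≤ if i ∈ S then b i else a i}.indicator 1 ω ∂μ := by
        simp_rw [prod_sub_eq_sum_ite, Fintype.card_fin, hcorner]
        exact integral_finsetSum _ fun S _ => (hint S).const_mul _
    _ = _ := by simp_rw [integral_const_mul, jointCDF_eq_integral_prod_indicator μ hU]

theorem isCopula_jointCDF [IsProbabilityMeasure μ] (hU : ∀ i, Measurable (U i))
    (hunif : ∀ i, ∀ x ∈ Icc (0 : ℝ) 1, μ {ω | U i ω ≤ x} = ENNReal.ofReal x) :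
    IsCopula d (jointCDF μ U) :=
  ⟨fun _ _ ⟨_, hi⟩ => jointCDF_eq_zero μ hunif hi,
    fun _ hv i hi => jointCDF_eq_of_forall_ne μ hU hunif (hv i) hi,
    fun _ _ _ _ hab => sum_neg_one_pow_mul_jointCDF_nonneg μ hU hab⟩

end JointCDF

instance : IsProbabilityMeasure (volume.restrict (Ioc (0 : ℝ) 1)) :=
  ⟨by simp⟩

section PiecewiseShift

def piecewiseShift (K : ℕ) (p c : ℕ → ℝ) (t : ℝ) : ℝ :=
  ∑ k ∈ Finset.range K, (Ioc (p k) (p (k + 1))).indicator (fun s => s + c k) t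

variable {K : ℕ} {p c : ℕ → ℝ}

theorem piecewiseShift_eq (hp : Monotone p) {k : ℕ} (hk : k < K) {t : ℝ}
    (ht : t ∈ Ioc (p k) (p (k + 1))) : piecewiseShift K p c t = t + c k := by
  have hoff : ∀ l ≠ k, t ∉ Ioc (p l) (p (l + 1)) := fun l hlk =>
    Set.disjoint_right.1 (hp.pairwise_disjoint_on_Ioc_succ hlk) ht
  rw [piecewiseShift, Finset.sum_eq_single_of_mem k (Finset.mem_range.2 hk)
    fun l _ hlk => indicator_of_notMem (hoff l hlk) _, indicator_of_mem ht]

theorem exists_piecewiseShift_eq (hp : Monotone p) {t : ℝ} (ht : t ∈ Ioc (p 0) (p K)) :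
    ∃ k < K, t ∈ Ioc (p k) (p (k + 1)) ∧ piecewiseShift K p c t = t + c k := by
  obtain ⟨k, hk, htk⟩ := mem_iUnion₂.1 (Ioc_subset_biUnion_Ioc K p ht)
  exact ⟨k, Finset.mem_range.1 hk, htk, piecewiseShift_eq hp (Finset.mem_range.1 hk) htk⟩

theorem measurable_piecewiseShift : Measurable (piecewiseShift K p c) :=
  Finset.measurable_sum _ fun _ _ => (measurable_id.add_const _).indicator measurableSet_Ioc

theorem ofReal_min_sub_eq_ofReal_min_sub_min (a b c x : ℝ) :
    ENNReal.ofReal (min b (x - c) - a) = ENNReal.ofReal (min (b + c) x - min (a + c) x) := by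
  rcases le_total x (a + c) with h | h
  · rw [ENNReal.ofReal_of_nonpos, ENNReal.ofReal_of_nonpos]
    · linarith [min_le_right (b + c) x, min_eq_right h]
    · linarith [min_le_right b (x - c)]
  · rw [min_eq_left h]
    rcases le_total b (x - c) with h' | h'
    · rw [min_eq_left h', min_eq_left (by linarith)]; ring_nf
    · rw [min_eq_right h', min_eq_right (by linarith)]; ring_nf

/-- `htile` holds for all `x ∈ [0, 1]` when the translated pieces `(p k + c k, p (k+1) + c k]`
tile `(0, 1]`. -/
theorem volume_restrict_piecewiseShift_le (hp : Monotone p) (h0 : p 0 = 0) (hK : p K = 1)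
    {x : ℝ} (htile : ∑ k ∈ Finset.range K, (min (p (k + 1) + c k) x - min (p k + c k) x) = x) :
    volume.restrict (Ioc 0 1) {t | piecewiseShift K p c t ≤ x} = ENNReal.ofReal x := by
  have hset : {t | piecewiseShift K p c t ≤ x} ∩ Ioc 0 1 =
      ⋃ k ∈ Finset.range K, Ioc (p k) (min (p (k + 1)) (x - c k)) := by
    ext t
    simp only [mem_inter_iff, mem_ofPred_eq, mem_iUnion₂, Finset.mem_range, mem_Ioc, le_min_iff]
    constructor
    · rintro ⟨hφ, ht⟩
      obtain ⟨k, hk, htk, hφk⟩ :=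
        exists_piecewiseShift_eq (K := K) (c := c) hp (t := t) (by rwa [h0, hK])
      exact ⟨k, hk, htk.1, htk.2, by linarith⟩
    · rintro ⟨k, hk, h1, h2, h3⟩
      have hφ := piecewiseShift_eq (c := c) hp hk ⟨h1, h2⟩
      have h0k := hp k.zero_le
      have hkK := hp (Nat.succ_le_of_lt hk)
      exact ⟨by linarith, by linarith, by linarith⟩
  have hdisj : (Finset.range K : Set ℕ).PairwiseDisjoint
      fun k => Ioc (p k) (min (p (k + 1)) (x - c k)) := fun k _ l _ hkl =>
    (hp.pairwise_disjoint_on_Ioc_succ hkl).mono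
      (Ioc_subset_Ioc_right (min_le_left _ _)) (Ioc_subset_Ioc_right (min_le_left _ _))
  rw [Measure.restrict_apply (measurableSet_le measurable_piecewiseShift measurable_const), hset,
    measure_biUnion_finset hdisj fun _ _ => measurableSet_Ioc]
  simp_rw [Real.volume_Ioc]
  rw [Finset.sum_congr rfl fun k _ =>
      ofReal_min_sub_eq_ofReal_min_sub_min (p k) (p (k + 1)) (c k) x,
    ← ENNReal.ofReal_sum_of_nonneg fun k _ => sub_nonneg.2 <|
      min_le_min_right x (by linarith [hp k.le_succ]), htile]

end PiecewiseShift

def lowCut (ε : ℝ) (δ : ℕ → ℝ) (j : ℕ) : ℝ := ∑ k ∈ Finset.range j, (ε + δ k)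

def highCut (ε : ℝ) (δ : ℕ → ℝ) (j : ℕ) : ℝ := ∑ k ∈ Finset.range j, (ε - δ k)

theorem lowCut_zero (ε : ℝ) (δ : ℕ → ℝ) : lowCut ε δ 0 = 0 := Finset.sum_range_zero _

theorem highCut_zero (ε : ℝ) (δ : ℕ → ℝ) : highCut ε δ 0 = 0 := Finset.sum_range_zero _

theorem lowCut_succ (ε : ℝ) (δ : ℕ → ℝ) (j : ℕ) :
    lowCut ε δ (j + 1) = lowCut ε δ j + (ε + δ j) :=
  Finset.sum_range_succ _ _

theorem highCut_succ (ε : ℝ) (δ : ℕ → ℝ) (j : ℕ) :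
    highCut ε δ (j + 1) = highCut ε δ j + (ε - δ j) :=
  Finset.sum_range_succ _ _

/-- The hypotheses on `δ` with `d = 2n` and `ε = 1/(d+1)`, so that `1 - 2ε = (d-1)/(d+1)` and
`1 - ε = d/(d+1)`; `δ` is indexed from `0` and its values from `n` on only have to lie in
`[0, ε]`. -/
structure Admissible (n : ℕ) (ε : ℝ) (δ : ℕ → ℝ) : Prop where
  eps_mul : (2 * n + 1) * ε = 1
  nonneg : ∀ k, 0 ≤ δ k
  le_eps : ∀ k, δ k ≤ ε
  sum_eq : ∑ k ∈ Finset.range n, δ k = (n - 1) * ε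

namespace Admissible

variable {n : ℕ} {ε : ℝ} {δ : ℕ → ℝ}

theorem eps_pos (h : Admissible n ε δ) : 0 < ε := by
  nlinarith [h.eps_mul, (n.cast_nonneg : (0 : ℝ) ≤ n)]

theorem lowCut_mono (h : Admissible n ε δ) : Monotone (lowCut ε δ) :=
  monotone_nat_of_le_succ fun j => by
    rw [lowCut_succ]; linarith [h.eps_pos, h.nonneg j]

theorem highCut_mono (h : Admissible n ε δ) : Monotone (highCut ε δ) :=
  monotone_nat_of_le_succ fun j => by
    rw [highCut_succ]; linarith [h.le_eps j]

theorem lowCut_self (h : Admissible n ε δ) : lowCut ε δ n = 1 - 2 * ε := by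
  rw [lowCut, Finset.sum_add_distrib, h.sum_eq]
  simp only [Finset.sum_const, Finset.card_range, nsmul_eq_mul]
  linear_combination h.eps_mul

theorem highCut_self (h : Admissible n ε δ) : highCut ε δ n = ε := by
  rw [highCut, Finset.sum_sub_distrib, h.sum_eq]
  simp only [Finset.sum_const, Finset.card_range, nsmul_eq_mul]
  ring

theorem lowCut_le (h : Admissible n ε δ) {j : ℕ} (hj : j ≤ n) : lowCut ε δ j ≤ 1 - 2 * ε :=
  (h.lowCut_mono hj).trans_eq h.lowCut_self

theorem highCut_le (h : Admissible n ε δ) {j : ℕ} (hj : j ≤ n) : highCut ε δ j ≤ ε :=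
  (h.highCut_mono hj).trans_eq h.highCut_self

theorem lowCut_nonneg (h : Admissible n ε δ) (j : ℕ) : 0 ≤ lowCut ε δ j :=
  lowCut_zero ε δ ▸ h.lowCut_mono j.zero_le

theorem highCut_nonneg (h : Admissible n ε δ) (j : ℕ) : 0 ≤ highCut ε δ j :=
  highCut_zero ε δ ▸ h.highCut_mono j.zero_le

theorem two_eps_le_one (h : Admissible n ε δ) : 2 * ε ≤ 1 := by
  linarith [h.lowCut_le n.zero_le, lowCut_zero ε δ]

end Admissible

/- With `β = 1 - ε` and `M = highCut ε δ`, `headMap ε δ m` fixes `(0, β - M (m+1)]`, moves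
`(β - M (m+1), β - M m]` onto `(β + δ m, 1]` and `(β - M m, 1]` onto `(β - M (m+1), β + δ m]`. -/

def headBreak (ε : ℝ) (δ : ℕ → ℝ) (m : ℕ) : ℕ → ℝ
  | 0 => 0
  | 1 => 1 - ε - highCut ε δ (m + 1)
  | 2 => 1 - ε - highCut ε δ m
  | _ => 1

def headShift (ε : ℝ) (δ : ℕ → ℝ) (m : ℕ) : ℕ → ℝ
  | 0 => 0
  | 1 => ε + highCut ε δ m
  | _ => δ m - ε

def headMap (ε : ℝ) (δ : ℕ → ℝ) (m : ℕ) : ℝ → ℝ :=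
  piecewiseShift 3 (headBreak ε δ m) (headShift ε δ m)

/- With `α = 1 - 2ε`, `β = 1 - ε`, `L = lowCut ε δ` and `M = highCut ε δ`, `tailMap ε δ j` fixes
`(0, L j]` and sends `(L j, L (j+1)]` onto `(α, β + δ j]`, `(L (j+1), α]` onto
`(L j, α - ε - δ j]`, `(α, β + M j]` onto `(α - ε - M j, α]`, `(β + M j, β + M (j+1)]` onto
`(β + δ j, 1]` and `(β + M (j+1), 1]` onto `(α - ε - δ j, α - ε - M j]`. -/

def tailBreak (ε : ℝ) (δ : ℕ → ℝ) (j : ℕ) : ℕ → ℝ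
  | 0 => 0
  | 1 => lowCut ε δ j
  | 2 => lowCut ε δ (j + 1)
  | 3 => 1 - 2 * ε
  | 4 => 1 - ε + highCut ε δ j
  | 5 => 1 - ε + highCut ε δ (j + 1)
  | _ => 1

def tailShift (ε : ℝ) (δ : ℕ → ℝ) (j : ℕ) : ℕ → ℝ
  | 0 => 0
  | 1 => 1 - 2 * ε - lowCut ε δ j
  | 2 => -(ε + δ j)
  | 3 => -(ε + highCut ε δ j)
  | 4 => δ j - highCut ε δ j
  | _ => -(2 * ε + δ j + highCut ε δ (j + 1))

def tailMap (ε : ℝ) (δ : ℕ → ℝ) (j : ℕ) : ℝ → ℝ :=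
  piecewiseShift 6 (tailBreak ε δ j) (tailShift ε δ j)

/-- Coordinate `i < n` of the reversed point is `1 - ε + δ (n - 1 - i)`, hence the index of its
`headMap`. -/
def extremalFamily (n : ℕ) (ε : ℝ) (δ : ℕ → ℝ) (i : Fin (2 * n)) : ℝ → ℝ :=
  if (i : ℕ) < n then headMap ε δ (n - 1 - i) else tailMap ε δ (i - n)

theorem headMap_tiling (ε : ℝ) (δ : ℕ → ℝ) (m : ℕ) {x : ℝ} (hx : x ∈ Icc (0 : ℝ) 1) :
    ∑ k ∈ Finset.range 3, (min (headBreak ε δ m (k + 1) + headShift ε δ m k) x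
      - min (headBreak ε δ m k + headShift ε δ m k) x) = x := by
  simp only [Finset.sum_range_succ, Finset.sum_range_zero, headBreak, headShift, highCut_succ]
  ring_nf
  rw [min_eq_left hx.1, min_eq_right hx.2]
  ring

theorem tailMap_tiling (ε : ℝ) (δ : ℕ → ℝ) (j : ℕ) {x : ℝ} (hx : x ∈ Icc (0 : ℝ) 1) :
    ∑ k ∈ Finset.range 6, (min (tailBreak ε δ j (k + 1) + tailShift ε δ j k) x
      - min (tailBreak ε δ j k + tailShift ε δ j k) x) = x := by
  simp only [Finset.sum_range_succ, Finset.sum_range_zero, tailBreak, tailShift, highCut_succ,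
    lowCut_succ]
  ring_nf
  rw [min_eq_left hx.1, min_eq_right hx.2]
  ring

namespace Admissible

variable {n : ℕ} {ε : ℝ} {δ : ℕ → ℝ}

theorem headBreak_mono (h : Admissible n ε δ) {m : ℕ} (hm : m < n) :
    Monotone (headBreak ε δ m) := by
  refine monotone_nat_of_le_succ fun k => ?_
  rcases k with _ | _ | _ | k <;> simp only [headBreak] <;>
    linarith [h.highCut_le hm, h.highCut_mono m.le_succ, h.highCut_nonneg m, h.two_eps_le_one]

theorem tailBreak_mono (h : Admissible n ε δ) {j : ℕ} (hj : j < n) :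
    Monotone (tailBreak ε δ j) := by
  refine monotone_nat_of_le_succ fun k => ?_
  rcases k with _ | _ | _ | _ | _ | _ | k <;> simp only [tailBreak] <;>
    linarith [h.lowCut_nonneg j, h.lowCut_mono j.le_succ, h.lowCut_le hj, h.highCut_nonneg j,
      h.highCut_mono j.le_succ, h.highCut_le hj, h.eps_pos]

theorem headMap_uniform (h : Admissible n ε δ) {m : ℕ} (hm : m < n) {x : ℝ}
    (hx : x ∈ Icc (0 : ℝ) 1) :
    volume.restrict (Ioc 0 1) {t | headMap ε δ m t ≤ x} = ENNReal.ofReal x :=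
  volume_restrict_piecewiseShift_le (h.headBreak_mono hm) rfl rfl (headMap_tiling ε δ m hx)

theorem tailMap_uniform (h : Admissible n ε δ) {j : ℕ} (hj : j < n) {x : ℝ}
    (hx : x ∈ Icc (0 : ℝ) 1) :
    volume.restrict (Ioc 0 1) {t | tailMap ε δ j t ≤ x} = ENNReal.ofReal x :=
  volume_restrict_piecewiseShift_le (h.tailBreak_mono hj) rfl rfl (tailMap_tiling ε δ j hx)

theorem headMap_le_iff (h : Admissible n ε δ) {m : ℕ} (hm : m < n) {t : ℝ}
    (ht : t ∈ Ioc (0 : ℝ) 1) : headMap ε δ m t ≤ 1 - 2 * ε ↔ t ≤ 1 - 2 * ε := by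
  obtain ⟨k, hk, htk, hφ⟩ := exists_piecewiseShift_eq (K := 3) (c := headShift ε δ m)
    (h.headBreak_mono hm) ht
  rw [headMap, hφ]
  interval_cases k <;> simp only [headBreak, headShift, mem_Ioc] at htk ⊢ <;>
    constructor <;> intro <;>
    linarith [h.highCut_le hm, highCut_succ ε δ m, h.le_eps m, h.highCut_nonneg m]

theorem lt_headMap (h : Admissible n ε δ) {m : ℕ} (hm : m < n) {t : ℝ}
    (ht : t ∈ Ioc (1 - ε - highCut ε δ (m + 1)) (1 - ε - highCut ε δ m)) :
    1 - ε + δ m < headMap ε δ m t := by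
  rw [headMap, piecewiseShift_eq (k := 1) (h.headBreak_mono hm) (by norm_num) ht, headShift]
  linarith [ht.1, highCut_succ ε δ m]

theorem tailMap_le (h : Admissible n ε δ) {j : ℕ} (hj : j < n) {t : ℝ}
    (ht : t ∈ Ioc 0 (1 - 2 * ε)) : tailMap ε δ j t ≤ 1 - ε + δ j := by
  obtain ⟨k, hk, htk, hφ⟩ := exists_piecewiseShift_eq (K := 6) (c := tailShift ε δ j)
    (h.tailBreak_mono hj) ⟨ht.1, show t ≤ 1 by linarith [ht.2, h.eps_pos]⟩
  rw [tailMap, hφ]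
  interval_cases k <;> simp only [tailBreak, tailShift, mem_Ioc] at htk ⊢ <;>
    linarith [ht.2, h.lowCut_le hj, lowCut_succ ε δ j, h.nonneg j, h.highCut_nonneg j,
      h.highCut_mono j.le_succ, h.eps_pos]

theorem lt_tailMap_of_mem_low (h : Admissible n ε δ) {j : ℕ} (hj : j < n) {t : ℝ}
    (ht : t ∈ Ioc (lowCut ε δ j) (lowCut ε δ (j + 1))) : 1 - 2 * ε < tailMap ε δ j t := by
  rw [tailMap, piecewiseShift_eq (k := 1) (h.tailBreak_mono hj) (by norm_num) ht, tailShift]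
  linarith [ht.1]

theorem lt_tailMap_of_mem_high (h : Admissible n ε δ) {j : ℕ} (hj : j < n) {t : ℝ}
    (ht : t ∈ Ioc (1 - ε + highCut ε δ j) (1 - ε + highCut ε δ (j + 1))) :
    1 - 2 * ε < tailMap ε δ j t := by
  rw [tailMap, piecewiseShift_eq (k := 4) (h.tailBreak_mono hj) (by norm_num) ht, tailShift]
  linarith [ht.1, h.nonneg j, h.eps_pos]

theorem isCopula_extremalFamily (h : Admissible n ε δ) :
    IsCopula (2 * n) (jointCDF (volume.restrict (Ioc 0 1)) (extremalFamily n ε δ)) := by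
  refine isCopula_jointCDF _ (fun i => ?_) fun i x hx => ?_ <;>
    unfold extremalFamily <;> split_ifs with hi
  · exact measurable_piecewiseShift
  · exact measurable_piecewiseShift
  · exact h.headMap_uniform (by omega) hx
  · exact h.tailMap_uniform (by omega) hx

theorem jointCDF_extremalFamily (h : Admissible n ε δ) (hn : 0 < n) {v : Fin (2 * n) → ℝ}
    (hv_head : ∀ i : Fin (2 * n), (i : ℕ) < n → v i = 1 - 2 * ε)
    (hv_tail : ∀ i : Fin (2 * n), n ≤ (i : ℕ) → v i = 1 - ε + δ (i - n)) :
    jointCDF (volume.restrict (Ioc 0 1)) (extremalFamily n ε δ) v = 1 - 2 * ε := by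
  have hset : {t | ∀ i, extremalFamily n ε δ i t ≤ v i} ∩ Ioc 0 1 = Ioc 0 (1 - 2 * ε) := by
    ext t
    refine ⟨fun ⟨hφ, ht⟩ => ⟨ht.1, ?_⟩,
      fun ht => ⟨fun i => ?_, ht.1, by linarith [ht.2, h.eps_pos]⟩⟩
    · have h0 := hφ ⟨0, by omega⟩
      rw [extremalFamily, if_pos hn, hv_head _ hn] at h0
      exact (h.headMap_le_iff (by omega) ht).1 h0
    · by_cases hi : (i : ℕ) < n
      · rw [extremalFamily, if_pos hi, hv_head i hi]
        exact (h.headMap_le_iff (by omega) ⟨ht.1, by linarith [ht.2, h.eps_pos]⟩).2 ht.2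
      · rw [extremalFamily, if_neg hi, hv_tail i (not_lt.1 hi)]
        exact h.tailMap_le (by omega) ht
  rw [jointCDF, measureReal_restrict_apply' measurableSet_Ioc, hset,
    Real.volume_real_Ioc_of_le (by linarith [h.two_eps_le_one]), sub_zero]

theorem jointCDF_extremalFamily_eq_zero (h : Admissible n ε δ) {w : Fin (2 * n) → ℝ}
    (hw_head : ∀ i : Fin (2 * n), (i : ℕ) < n → w i = 1 - ε + δ (n - 1 - i))
    (hw_tail : ∀ i : Fin (2 * n), n ≤ (i : ℕ) → w i = 1 - 2 * ε) :
    jointCDF (volume.restrict (Ioc 0 1)) (extremalFamily n ε δ) w = 0 := by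
  have htail : ∀ j < n, ∀ t, 1 - 2 * ε < tailMap ε δ j t →
      ¬ ∀ i, extremalFamily n ε δ i t ≤ w i := fun j hj t hlt hφ => by
    have := hφ ⟨n + j, by omega⟩
    rw [extremalFamily, if_neg (by simp), hw_tail _ (by simp)] at this
    simp only [Nat.add_sub_cancel_left] at this
    linarith
  have hset : {t | ∀ i, extremalFamily n ε δ i t ≤ w i} ∩ Ioc 0 1 = ∅ := by
    refine eq_empty_of_forall_notMem fun t ⟨hφ, ht⟩ => ?_
    rcases le_or_gt t (1 - 2 * ε) with hα | hα
    · obtain ⟨j, hj, htj⟩ := mem_iUnion₂.1 (Ioc_subset_biUnion_Ioc n (lowCut ε δ)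
        ⟨by rw [lowCut_zero]; exact ht.1, by rwa [h.lowCut_self]⟩)
      have hj := Finset.mem_range.1 hj
      exact htail j hj t (h.lt_tailMap_of_mem_low hj htj) hφ
    rcases le_or_gt t (1 - ε) with hβ | hβ
    · obtain ⟨m, hm, hmt⟩ := mem_iUnion₂.1 (Ico_subset_biUnion_Ico n (highCut ε δ)
        (show 1 - ε - t ∈ Ico _ _ from
          ⟨by rw [highCut_zero]; linarith, by rw [h.highCut_self]; linarith⟩))
      have hm := Finset.mem_range.1 hm
      have := hφ ⟨n - 1 - m, by omega⟩
      rw [extremalFamily, if_pos (by rw [Fin.val_mk]; omega),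
        hw_head _ (by rw [Fin.val_mk]; omega)] at this
      simp only [show n - 1 - (n - 1 - m) = m by omega] at this
      exact (h.lt_headMap hm ⟨by linarith [hmt.2], by linarith [hmt.1]⟩).not_ge this
    · obtain ⟨j, hj, htj⟩ := mem_iUnion₂.1 (Ioc_subset_biUnion_Ioc n
        (fun j => 1 - ε + highCut ε δ j)
        ⟨by simp only [highCut_zero]; linarith, by simp only [h.highCut_self]; linarith [ht.2]⟩)
      have hj := Finset.mem_range.1 hj
      exact htail j hj t (h.lt_tailMap_of_mem_high hj htj) hφ
  rw [jointCDF, measureReal_restrict_apply' measurableSet_Ioc, hset, measureReal_empty]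

end Admissible

theorem exists_admissible_extension {n : ℕ} {ε : ℝ} (hε : (2 * n + 1) * ε = 1)
    {δ : Fin n → ℝ} (h0 : ∀ j, 0 ≤ δ j) (h1 : ∀ j, δ j ≤ ε) (hsum : ∑ j, δ j = (n - 1) * ε) :
    ∃ δ' : ℕ → ℝ, Admissible n ε δ' ∧ ∀ j : Fin n, δ' j = δ j := by
  have hε0 : 0 ≤ ε := by nlinarith [(n.cast_nonneg : (0 : ℝ) ≤ n)]
  refine ⟨fun k => if hk : k < n then δ ⟨k, hk⟩ else 0, ⟨hε, fun k => ?_, fun k => ?_, ?_⟩,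
    fun j => dif_pos j.isLt⟩
  · split_ifs
    exacts [h0 _, le_rfl]
  · split_ifs
    exacts [h1 _, hε0]
  · rw [← hsum, ← Fin.sum_univ_eq_sum_range]
    exact Finset.sum_congr rfl fun j _ => dif_pos j.isLt

end

/-- For even `d = 2n` (`n ≥ 2`) and any point `u` with `u_1 = ⋯ = u_n = (d−1)/(d+1)` and
`u_{n+j} = d/(d+1) + δ_j`, where `0 ≤ δ_1 ≤ ⋯ ≤ δ_n ≤ 1/(d+1)` and
`Σ δ_j = (n−1)/(d+1)`, there is a `d`-copula attaining the maximal non-exchangeability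
`(d−1)/(d+1)` at `u`; the order-reversing permutation `π(j) = d − j + 1`
(0-indexed: `i ↦ d − 1 − i`, i.e. `Fin.rev`) can be taken. -/
theorem max_attained_even (d n : ℕ) (hn : 2 ≤ n) (hd : d = 2 * n)
    (u : Fin d → ℝ) (δ : Fin n → ℝ)
    (hδ0 : ∀ j, 0 ≤ δ j)
    (hδ1 : ∀ j, δ j ≤ 1 / ((d : ℝ) + 1))
    (hδsum : ∑ j, δ j = ((n : ℝ) - 1) / ((d : ℝ) + 1))
    (hu1 : ∀ i : Fin d, (i : ℕ) < n → u i = ((d : ℝ) - 1) / ((d : ℝ) + 1))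
    (hu2 : ∀ j : Fin n, u ⟨n + (j : ℕ), by omega⟩ = (d : ℝ) / ((d : ℝ) + 1) + δ j) :
    ∃ C : (Fin d → ℝ) → ℝ, IsCopula d C ∧
      |C u - C (u ∘ Fin.rev)| = ((d : ℝ) - 1) / ((d : ℝ) + 1) := by
  subst hd
  set ε : ℝ := 1 / (((2 * n : ℕ) : ℝ) + 1) with hε
  have hα : (((2 * n : ℕ) : ℝ) - 1) / (((2 * n : ℕ) : ℝ) + 1) = 1 - 2 * ε := by
    rw [hε]; push_cast; field_simp; ring
  have hβ : ((2 * n : ℕ) : ℝ) / (((2 * n : ℕ) : ℝ) + 1) = 1 - ε := by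
    rw [hε]; push_cast; field_simp; ring
  obtain ⟨δ', h, hδ'⟩ := exists_admissible_extension (by rw [hε]; push_cast; field_simp)
    hδ0 hδ1 (by rw [hδsum]; ring)
  have hu_head : ∀ i : Fin (2 * n), (i : ℕ) < n → u i = 1 - 2 * ε := fun i hi => hα ▸ hu1 i hi
  have hu_tail : ∀ i : Fin (2 * n), n ≤ (i : ℕ) → u i = 1 - ε + δ' (i - n) := fun i hi => by
    have hj : (i : ℕ) - n < n := by omega
    rw [hδ' ⟨_, hj⟩, ← hβ, ← hu2 ⟨_, hj⟩]
    congr 1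
    exact Fin.ext (Nat.add_sub_cancel' hi).symm
  refine ⟨_, h.isCopula_extremalFamily, ?_⟩
  rw [h.jointCDF_extremalFamily (by omega) hu_head hu_tail,
    h.jointCDF_extremalFamily_eq_zero (w := u ∘ Fin.rev) (fun i hi => ?_)
      (fun i hi => hu_head _ (by rw [Fin.val_rev]; omega)), sub_zero, hα,
    abs_of_nonneg (by linarith [h.two_eps_le_one])]
  rw [Function.comp_apply, hu_tail _ (by rw [Fin.val_rev]; omega), Fin.val_rev]
  congr 2; omega
end
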